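/- arXiv:2308.15403 — 2 statements merged into one kernel-verified Lean document; each statement's English description precedes it below -/
import Mathlib

section
/- There is an absolute constant c' > 0 such that, under the even-q Kikuchi setup with n ≥ 2 and A := Σ_{i=1}^k b_i A_i for b ∈ {-1,1}^k: E_{b uniform in {-1,1}^k}[‖A‖_2] ≤ c' · √(k · ℓ · log n), where ‖·‖_2 denotes the spectral norm (largest singular value). -/
open Finset
open scoped Classical

noncomputable section

/-- The map sending a Boolean to the corresponding element of `{-1, 1} ⊆ ℝ`. -/
def pmo (b : Bool) : ℝ := if b then 1 else -1

/-- `H` is a `q`-uniform hypergraph matching on `[n]`. -/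
def IsMatching {n : ℕ} (q : ℕ) (H : Finset (Finset (Fin n))) : Prop :=
  (∀ C ∈ H, C.card = q) ∧ Set.Pairwise (H : Set (Finset (Fin n))) Disjoint

/-- The `(S,T)` entry of the even-`q` Kikuchi matrix `A_i` is `1` iff this predicate
holds. -/
def evenKikPred {n : ℕ} (Hi : Finset (Finset (Fin n))) (ℓ : ℕ)
    (S T : Finset (Fin n)) : Prop :=
  ∃ C ∈ Hi, symmDiff S T = C ∧
    ∀ C' ∈ Hi, C' ≠ C → (symmDiff S C').card ≠ ℓ ∧ (symmDiff T C').card ≠ ℓ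

/-- The index set of the even-`q` Kikuchi matrices: `ℓ`-element subsets of `[n]`. -/
abbrev EIdx (n ℓ : ℕ) := {S : Finset (Fin n) // S.card = ℓ}

/-- The even-`q` Kikuchi matrix `A_i`. -/
def evenKikMatrix {n : ℕ} (Hi : Finset (Finset (Fin n))) (ℓ : ℕ) :
    Matrix (EIdx n ℓ) (EIdx n ℓ) ℝ :=
  fun S T => if evenKikPred Hi ℓ S.1 T.1 then 1 else 0

/-- The spectral norm (largest singular value) of a real square matrix. -/
def specNorm {m : Type*} [Fintype m] [DecidableEq m] (M : Matrix m m ℝ) : ℝ :=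
  ‖Matrix.toEuclideanCLM (𝕜 := ℝ) M‖

set_option linter.unusedSectionVars false

open Matrix

/-! ### Auxiliary material: sub-permutation matrices -/

section SubPerm
variable {μ : Type*} [Fintype μ] [DecidableEq μ]

/-- A 0/1 matrix with at most one `1` per row. -/
def SubPerm (M : Matrix μ μ ℝ) : Prop :=
  ∀ s, (∀ t, M s t = 0) ∨ ∃ t0, M s t0 = 1 ∧ ∀ t, t ≠ t0 → M s t = 0

lemma SubPerm.one : SubPerm (1 : Matrix μ μ ℝ) := by
  intro s
  refine Or.inr ⟨s, ?_, fun t ht => ?_⟩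
  · simp [Matrix.one_apply]
  · simp [Matrix.one_apply, Ne.symm ht]

lemma SubPerm.mul {M N : Matrix μ μ ℝ} (hM : SubPerm M) (hN : SubPerm N) :
    SubPerm (M * N) := by
  intro s
  rcases hM s with h | ⟨t0, h1, h0⟩
  · refine Or.inl fun t => ?_
    rw [Matrix.mul_apply]
    exact Finset.sum_eq_zero fun t' _ => by rw [h t', zero_mul]
  · have key : ∀ u, (M * N) s u = N t0 u := by
      intro u
      rw [Matrix.mul_apply]
      rw [Finset.sum_eq_single t0 (fun b _ hb => by rw [h0 b hb, zero_mul])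
        (fun h => absurd (Finset.mem_univ t0) h)]
      rw [h1, one_mul]
    rcases hN t0 with h | ⟨u0, g1, g0⟩
    · exact Or.inl fun t => by rw [key, h]
    · exact Or.inr ⟨u0, by rw [key, g1], fun t ht => by rw [key, g0 t ht]⟩

lemma SubPerm.entry_nonneg {M : Matrix μ μ ℝ} (hM : SubPerm M) (s t : μ) :
    0 ≤ M s t := by
  rcases hM s with h | ⟨t0, h1, h0⟩
  · rw [h t]
  · by_cases ht : t = t0
    · subst ht; rw [h1]; norm_num
    · rw [h0 t ht]

lemma SubPerm.entry_le_one {M : Matrix μ μ ℝ} (hM : SubPerm M) (s t : μ) :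
    M s t ≤ 1 := by
  rcases hM s with h | ⟨t0, h1, h0⟩
  · rw [h t]; norm_num
  · by_cases ht : t = t0
    · subst ht; rw [h1]
    · rw [h0 t ht]; norm_num

lemma SubPerm.listProd (L : List (Matrix μ μ ℝ)) (h : ∀ P ∈ L, SubPerm P) :
    SubPerm L.prod :=
  List.prod_induction _ (fun _ _ ha hb => ha.mul hb) SubPerm.one h

/-- Unbundled trace. -/
def mtr (M : Matrix μ μ ℝ) : ℝ := ∑ s, M s s

lemma SubPerm.mtr_nonneg {M : Matrix μ μ ℝ} (hM : SubPerm M) : 0 ≤ mtr M :=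
  Finset.sum_nonneg fun s _ => hM.entry_nonneg s s

lemma SubPerm.mtr_le_card {M : Matrix μ μ ℝ} (hM : SubPerm M) :
    mtr M ≤ Fintype.card μ := by
  have : mtr M ≤ ∑ _s : μ, (1 : ℝ) :=
    Finset.sum_le_sum fun s _ => hM.entry_le_one s s
  simpa using this

end SubPerm

/-! ### The Kikuchi matrices are symmetric sub-permutation matrices -/

section Kik
variable {n : ℕ} {Hi : Finset (Finset (Fin n))} {ℓ : ℕ}

lemma evenKikPred_symm {S T : Finset (Fin n)} (h : evenKikPred Hi ℓ S T) :
    evenKikPred Hi ℓ T S := by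
  obtain ⟨C, hC, hST, hg⟩ := h
  exact ⟨C, hC, by rwa [symmDiff_comm], fun C' h1 h2 => ⟨(hg C' h1 h2).2, (hg C' h1 h2).1⟩⟩

lemma evenKikMatrix_symm : (evenKikMatrix Hi ℓ)ᵀ = evenKikMatrix Hi ℓ := by
  ext S T
  simp only [Matrix.transpose_apply, evenKikMatrix]
  by_cases h : evenKikPred Hi ℓ S.1 T.1
  · rw [if_pos h, if_pos (evenKikPred_symm h)]
  · rw [if_neg h, if_neg (fun h' => h (evenKikPred_symm h'))]

lemma evenKikMatrix_subPerm : SubPerm (evenKikMatrix Hi ℓ) := by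
  intro S
  by_cases hex : ∃ T : EIdx n ℓ, evenKikPred Hi ℓ S.1 T.1
  · obtain ⟨T0, hT0⟩ := hex
    refine Or.inr ⟨T0, if_pos hT0, fun T hT => ?_⟩
    rw [evenKikMatrix, if_neg]
    intro hpred
    apply hT
    obtain ⟨C, hC, hSC, hg⟩ := hpred
    obtain ⟨C0, hC0, hSC0, hg0⟩ := hT0
    have e0 : T0.1 = symmDiff S.1 C0 := by rw [← hSC0, symmDiff_symmDiff_cancel_left]
    by_cases hCC : C = C0
    · subst hCC
      have e1 : T.1 = symmDiff S.1 C := by rw [← hSC, symmDiff_symmDiff_cancel_left]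
      exact Subtype.ext (e1.trans e0.symm)
    · exfalso
      exact (hg C0 hC0 (Ne.symm hCC)).1 (by rw [← e0]; exact T0.2)
  · exact Or.inl fun T => by rw [evenKikMatrix, if_neg (fun hp => hex ⟨T, hp⟩)]

end Kik

/-! ### Spectral norm facts -/

section Norms
variable {μ : Type*} [Fintype μ] [DecidableEq μ]

lemma specNorm_nonneg (M : Matrix μ μ ℝ) : 0 ≤ specNorm M := norm_nonneg _

lemma specNorm_zero : specNorm (0 : Matrix μ μ ℝ) = 0 := by
  unfold specNorm; rw [map_zero, norm_zero]

lemma star_eq_self_of_symm {M : Matrix μ μ ℝ} (h : Mᵀ = M) : star M = M := by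
  rw [Matrix.star_eq_conjTranspose]
  ext i j
  simp only [Matrix.conjTranspose_apply, star_trivial]
  conv_rhs => rw [← h, Matrix.transpose_apply]

open scoped Matrix.Norms.L2Operator in
lemma specNorm_mul_self {M : Matrix μ μ ℝ} (h : Mᵀ = M) :
    specNorm (M * M) = specNorm M * specNorm M := by
  have hH : Mᴴ = M := by
    rw [← Matrix.star_eq_conjTranspose, star_eq_self_of_symm h]
  have e1 : specNorm (M * M) = ‖M * M‖ := (Matrix.cstar_norm_def _).symm
  have e2 : specNorm M = ‖M‖ := (Matrix.cstar_norm_def _).symm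
  rw [e1, e2]
  nth_rewrite 1 [← hH]
  exact Matrix.l2_opNorm_conjTranspose_mul_self M

lemma specNorm_pow_two_pow {M : Matrix μ μ ℝ} (h : Mᵀ = M) (j : ℕ) :
    specNorm (M ^ (2 ^ j)) = specNorm M ^ (2 ^ j) := by
  induction j with
  | zero => simp
  | succ j ih =>
    have h2 : M ^ (2 ^ (j + 1)) = M ^ (2 ^ j) * M ^ (2 ^ j) := by
      rw [← pow_add, pow_succ, mul_two]
    have hsym : (M ^ (2 ^ j))ᵀ = M ^ (2 ^ j) := by
      rw [Matrix.transpose_pow, h]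
    rw [h2, specNorm_mul_self hsym, ih, ← pow_add, pow_succ, mul_two]

lemma specNorm_le_frobenius (Q : Matrix μ μ ℝ) :
    specNorm Q ≤ Real.sqrt (∑ s, ∑ t, Q s t ^ 2) := by
  unfold specNorm
  apply ContinuousLinearMap.opNorm_le_bound _ (Real.sqrt_nonneg _)
  intro x
  have hx : ‖x‖ = Real.sqrt (∑ t, x t ^ 2) := by
    rw [EuclideanSpace.norm_eq]
    congr 1
    exact Finset.sum_congr rfl fun t _ => by rw [Real.norm_eq_abs, sq_abs]
  have happ : ∀ s, (Matrix.toEuclideanCLM (𝕜 := ℝ) Q x) s = ∑ t, Q s t * x t := by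
    intro s; rfl
  have hTx : ‖Matrix.toEuclideanCLM (𝕜 := ℝ) Q x‖
      = Real.sqrt (∑ s, (∑ t, Q s t * x t) ^ 2) := by
    rw [EuclideanSpace.norm_eq]
    congr 1
    exact Finset.sum_congr rfl fun s _ => by rw [Real.norm_eq_abs, sq_abs, happ]
  rw [hTx, hx]
  rw [← Real.sqrt_mul (by positivity)]
  apply Real.sqrt_le_sqrt
  rw [Finset.sum_mul]
  apply Finset.sum_le_sum
  intro s _
  calc (∑ t, Q s t * x t) ^ 2 ≤ (∑ t, Q s t ^ 2) * ∑ t, x t ^ 2 :=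
        Finset.sum_mul_sq_le_sq_mul_sq _ _ _
    _ = _ := rfl

lemma specNorm_pow_le_mtr {M : Matrix μ μ ℝ} (h : Mᵀ = M) (j : ℕ) :
    specNorm M ^ (2 * 2 ^ j) ≤ mtr (M ^ (2 * 2 ^ j)) := by
  set p := 2 ^ j with hp
  have hsymp : (M ^ p)ᵀ = M ^ p := by rw [Matrix.transpose_pow, h]
  have h1 : specNorm M ^ (2 * p) = specNorm (M ^ p) ^ 2 := by
    rw [specNorm_pow_two_pow h j, ← pow_mul, mul_comm]
  have h2 : specNorm (M ^ p) ^ 2 ≤ ∑ s, ∑ t, (M ^ p) s t ^ 2 := by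
    have hb := specNorm_le_frobenius (M ^ p)
    have := pow_le_pow_left₀ (specNorm_nonneg _) hb 2
    rwa [Real.sq_sqrt (by positivity)] at this
  have h3 : (∑ s, ∑ t, (M ^ p) s t ^ 2) = mtr (M ^ (2 * p)) := by
    rw [two_mul, pow_add, mtr]
    refine Finset.sum_congr rfl fun s _ => ?_
    rw [Matrix.mul_apply]
    refine Finset.sum_congr rfl fun t _ => ?_
    have h4 : (M ^ p) t s = (M ^ p) s t := by
      conv_lhs => rw [← hsymp, Matrix.transpose_apply]
    rw [sq, h4]
  rw [h1, ← h3]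
  exact h2

end Norms

/-! ### Expansion of powers of sums into words -/

section Expand

/-- Expansion of a power of a sum in a (noncommutative) ring as a sum over words. -/
lemma sum_pow_words {ι : Type*} [Fintype ι] {R : Type*} [Ring R] (x : ι → R) (m : ℕ) :
    (∑ i, x i) ^ m = ∑ w : Fin m → ι, (List.ofFn fun j => x (w j)).prod := by
  induction m with
  | zero =>
    simp
  | succ m ih =>
    have key : ∑ v : Fin (m + 1) → ι, (List.ofFn fun j => x (v j)).prod
        = ∑ i, ∑ w : Fin m → ι, x i * (List.ofFn fun j => x (w j)).prod := by
      rw [← (Fin.consEquiv (fun _ : Fin (m + 1) => ι)).sum_comp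
        (fun v : Fin (m + 1) → ι => (List.ofFn fun j => x (v j)).prod),
        Fintype.sum_prod_type]
      refine Finset.sum_congr rfl fun i _ => Finset.sum_congr rfl fun w _ => ?_
      have e : (List.ofFn fun j : Fin (m + 1) => x ((Fin.consEquiv fun _ => ι) (i, w) j))
          = x i :: List.ofFn fun j => x (w j) := by
        rw [List.ofFn_succ]
        simp [Fin.consEquiv]
      rw [e, List.prod_cons]
    rw [key, pow_succ', ih, Finset.mul_sum]
    simp_rw [Finset.sum_mul]
    rw [Finset.sum_comm]

/-- Pulling scalars out of an ordered list product. -/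
lemma list_smul_prod {μ : Type*} [Fintype μ] [DecidableEq μ] :
    ∀ (m : ℕ) (c : Fin m → ℝ) (M : Fin m → Matrix μ μ ℝ),
    (List.ofFn fun j => c j • M j).prod = (∏ j, c j) • (List.ofFn fun j => M j).prod := by
  intro m
  induction m with
  | zero => intro c M; simp
  | succ m ih =>
    intro c M
    rw [List.ofFn_succ, List.ofFn_succ, List.prod_cons, List.prod_cons,
      ih (fun j => c j.succ) (fun j => M j.succ), Fin.prod_univ_succ]
    rw [smul_mul_smul_comm]

/-- Sum over boolean vectors of a product of coordinate functions factorizes. -/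
lemma sum_prod_bool {k : ℕ} (f : Fin k → Bool → ℝ) :
    ∑ b : Fin k → Bool, ∏ i, f i (b i) = ∏ i, (f i true + f i false) := by
  have h : ∀ i : Fin k, f i true + f i false = ∑ β : Bool, f i β := by
    intro i; rw [Fintype.sum_bool]
  simp_rw [h]
  rw [Finset.prod_univ_sum, ← Fintype.piFinset_univ]

/-- The sum over sign vectors of a word product is nonnegative. -/
lemma word_sum_nonneg {k m : ℕ} (w : Fin m → Fin k) :
    0 ≤ ∑ b : Fin k → Bool, ∏ j, pmo (b (w j)) := by
  have h1 : ∀ b : Fin k → Bool, ∏ j, pmo (b (w j))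
      = ∏ a : Fin k, pmo (b a) ^ (Finset.univ.filter fun j => w j = a).card := by
    intro b
    rw [Finset.prod_comp (M := ℝ) (s := Finset.univ) (fun a => pmo (b a)) w]
    refine Finset.prod_subset (Finset.subset_univ _) fun a _ ha => ?_
    have h : (Finset.univ.filter fun j => w j = a) = ∅ := by
      rw [Finset.filter_eq_empty_iff]
      intro j _
      intro hj
      exact ha (Finset.mem_image.2 ⟨j, Finset.mem_univ j, hj⟩)
    rw [h, Finset.card_empty, pow_zero]
  simp_rw [h1]
  rw [sum_prod_bool (fun a β => pmo β ^ (Finset.univ.filter fun j => w j = a).card)]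
  apply Finset.prod_nonneg
  intro a _
  have ht : pmo true = 1 := rfl
  have h2 : pmo false = -1 := rfl
  rw [ht, h2, one_pow]
  rcases Nat.even_or_odd (Finset.univ.filter fun j => w j = a).card with he | ho
  · rw [he.neg_one_pow]; norm_num
  · rw [ho.neg_one_pow]; norm_num

/-- MGF computation for Rademacher sums. -/
lemma sum_exp_pmo {k : ℕ} (t : ℝ) :
    ∑ b : Fin k → Bool, Real.exp (t * ∑ i, pmo (b i))
      = (Real.exp t + Real.exp (-t)) ^ k := by
  have h1 : ∀ b : Fin k → Bool, Real.exp (t * ∑ i, pmo (b i))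
      = ∏ i, Real.exp (t * pmo (b i)) := by
    intro b
    rw [Finset.mul_sum, Real.exp_sum]
  simp_rw [h1]
  rw [sum_prod_bool (fun _ β => Real.exp (t * pmo β))]
  have e : Real.exp (t * pmo true) + Real.exp (t * pmo false)
      = Real.exp t + Real.exp (-t) := by
    simp [pmo, mul_neg]
  simp_rw [e]
  rw [Finset.prod_const, Finset.card_univ, Fintype.card_fin]

end Expand

/-! ### Scalar Khintchine-type moment bound -/

section Scalar

lemma pow_le_factorial_mul_exp {x : ℝ} (hx : 0 ≤ x) (m : ℕ) :
    x ^ m ≤ ((Nat.factorial m : ℕ) : ℝ) * Real.exp x := by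
  have h1 : x ^ m / ((Nat.factorial m : ℕ) : ℝ) ≤ Real.exp x := by
    refine le_trans ?_ (Real.sum_le_exp_of_nonneg hx (m + 1))
    exact Finset.single_le_sum (f := fun i => x ^ i / ((Nat.factorial i : ℕ) : ℝ))
      (fun i _ => by positivity) (Finset.mem_range.2 (Nat.lt_succ_self m))
  calc x ^ m = ((Nat.factorial m : ℕ) : ℝ) * (x ^ m / ((Nat.factorial m : ℕ) : ℝ)) := by
        field_simp
    _ ≤ ((Nat.factorial m : ℕ) : ℝ) * Real.exp x := by
        exact mul_le_mul_of_nonneg_left h1 (by positivity)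

lemma pow_le_exps (t S : ℝ) (p : ℕ) :
    t ^ (2 * p) * S ^ (2 * p)
      ≤ ((Nat.factorial (2 * p) : ℕ) : ℝ) * (Real.exp (t * S) + Real.exp (-(t * S))) := by
  have hev : Even (2 * p) := even_two_mul p
  have habs : t ^ (2 * p) * S ^ (2 * p) = (|t| * |S|) ^ (2 * p) := by
    rw [mul_pow, hev.pow_abs, hev.pow_abs]
  have h2 : (|t| * |S|) ^ (2 * p) ≤ ((Nat.factorial (2 * p) : ℕ) : ℝ) * Real.exp (|t * S|) := by
    rw [← abs_mul]
    exact pow_le_factorial_mul_exp (abs_nonneg _) (2 * p)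
  have h3 : Real.exp (|t * S|) ≤ Real.exp (t * S) + Real.exp (-(t * S)) := by
    rcases abs_cases (t * S) with ⟨he, _⟩ | ⟨he, _⟩
    · rw [he]
      exact le_add_of_nonneg_right (Real.exp_pos _).le
    · rw [he]
      exact le_add_of_nonneg_left (Real.exp_pos _).le
  calc t ^ (2 * p) * S ^ (2 * p) = (|t| * |S|) ^ (2 * p) := habs
    _ ≤ ((Nat.factorial (2 * p) : ℕ) : ℝ) * Real.exp (|t * S|) := h2
    _ ≤ _ := mul_le_mul_of_nonneg_left h3 (by positivity)

lemma sum_S_pow_le {k p : ℕ} (hk : 1 ≤ k) (hp : 1 ≤ p) :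
    ∑ b : Fin k → Bool, (∑ i, pmo (b i)) ^ (2 * p)
      ≤ 2 ^ k * ((24 : ℝ) * p * k) ^ p := by
  have hkR : (0 : ℝ) < k := by exact_mod_cast hk
  have hpR : (0 : ℝ) < p := by exact_mod_cast hp
  set t := Real.sqrt (p / k) with htdef
  have htpos : 0 < t := Real.sqrt_pos.2 (div_pos hpR hkR)
  have ht2 : t ^ 2 = (p : ℝ) / k := Real.sq_sqrt (div_pos hpR hkR).le
  have hA : t ^ (2 * p) = ((p : ℝ) / k) ^ p := by
    rw [pow_mul, ht2]
  have hsum : t ^ (2 * p) * ∑ b : Fin k → Bool, (∑ i, pmo (b i)) ^ (2 * p)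
      ≤ ((Nat.factorial (2 * p) : ℕ) : ℝ) * (2 * (Real.exp t + Real.exp (-t)) ^ k) := by
    rw [Finset.mul_sum]
    calc ∑ b : Fin k → Bool, t ^ (2 * p) * (∑ i, pmo (b i)) ^ (2 * p)
        ≤ ∑ b : Fin k → Bool, ((Nat.factorial (2 * p) : ℕ) : ℝ) *
            (Real.exp (t * ∑ i, pmo (b i)) + Real.exp (-(t * ∑ i, pmo (b i)))) := by
          exact Finset.sum_le_sum fun b _ => pow_le_exps t _ p
      _ = ((Nat.factorial (2 * p) : ℕ) : ℝ) * (2 * (Real.exp t + Real.exp (-t)) ^ k) := by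
          rw [← Finset.mul_sum]
          congr 1
          rw [Finset.sum_add_distrib, sum_exp_pmo t]
          have h : ∀ b : Fin k → Bool, -(t * ∑ i, pmo (b i)) = -t * ∑ i, pmo (b i) := by
            intro b; ring
          simp_rw [h]
          rw [sum_exp_pmo (-t), neg_neg, two_mul]
          ring
  have hcosh : Real.exp t + Real.exp (-t) ≤ 2 * Real.exp (t ^ 2 / 2) := by
    have := Real.cosh_le_exp_half_sq t
    rw [Real.cosh_eq] at this
    linarith
  have hexp3 : Real.exp (t ^ 2 / 2) ^ k ≤ 3 ^ p := by
    rw [← Real.exp_nat_mul]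
    have he : (k : ℝ) * (t ^ 2 / 2) = (p : ℝ) * (1 / 2) := by
      rw [ht2]; field_simp
    rw [he, Real.exp_nat_mul]
    refine pow_le_pow_left₀ (Real.exp_pos _).le ?_ p
    calc Real.exp (1 / 2) ≤ Real.exp 1 := Real.exp_le_exp.2 (by norm_num)
      _ ≤ 3 := by linarith [Real.exp_one_lt_d9]
  have hfac : ((Nat.factorial (2 * p) : ℕ) : ℝ) ≤ ((2 * p : ℕ) : ℝ) ^ (2 * p) := by
    exact_mod_cast Nat.factorial_le_pow (2 * p)
  have hRHS : ((Nat.factorial (2 * p) : ℕ) : ℝ) * (2 * (Real.exp t + Real.exp (-t)) ^ k)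
      ≤ t ^ (2 * p) * (2 ^ k * ((24 : ℝ) * p * k) ^ p) := by
    have h1 : (Real.exp t + Real.exp (-t)) ^ k ≤ (2 * Real.exp (t ^ 2 / 2)) ^ k :=
      pow_le_pow_left₀ (by positivity) hcosh k
    have h2 : ((2 : ℝ) * Real.exp (t ^ 2 / 2)) ^ k = 2 ^ k * Real.exp (t ^ 2 / 2) ^ k := by
      rw [mul_pow]
    have h3 : ((Nat.factorial (2 * p) : ℕ) : ℝ) * (2 * (Real.exp t + Real.exp (-t)) ^ k)
        ≤ ((2 * p : ℕ) : ℝ) ^ (2 * p) * (2 * (2 ^ k * 3 ^ p)) := by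
      have e1 : (Real.exp t + Real.exp (-t)) ^ k ≤ 2 ^ k * 3 ^ p := by
        refine h1.trans ?_
        rw [h2]
        exact mul_le_mul_of_nonneg_left hexp3 (by positivity)
      have e2 : (2 : ℝ) * (Real.exp t + Real.exp (-t)) ^ k ≤ 2 * (2 ^ k * 3 ^ p) := by
        linarith
      exact mul_le_mul hfac e2 (by positivity) (by positivity)
    refine h3.trans ?_
    rw [hA]
    have hpk : (p : ℝ) / k * (24 * p * k) = 24 * p ^ 2 := by
      field_simp
    have e5 : ((p : ℝ) / k) ^ p * (2 ^ k * ((24 : ℝ) * p * k) ^ p)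
        = 2 ^ k * ((24 : ℝ) * p ^ 2) ^ p := by
      rw [mul_comm (((p : ℝ) / k) ^ p), mul_assoc, ← mul_pow, mul_comm ((24 : ℝ) * p * k), hpk]
    rw [e5]
    have e4 : ((2 * p : ℕ) : ℝ) ^ (2 * p) = ((4 : ℝ) * p ^ 2) ^ p := by
      push_cast
      rw [show (2 * (p : ℝ)) ^ (2 * p) = (((2 * (p : ℝ)) ^ 2)) ^ p by rw [← pow_mul]]
      congr 1
      ring
    rw [e4]
    have e8 : ((4 : ℝ) * p ^ 2) ^ p * 3 ^ p = ((12 : ℝ) * p ^ 2) ^ p := by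
      rw [← mul_pow]; congr 1; ring
    have e6 : ((4 : ℝ) * p ^ 2) ^ p * (2 * (2 ^ k * 3 ^ p))
        = 2 ^ k * (2 * ((12 : ℝ) * p ^ 2) ^ p) := by
      calc ((4 : ℝ) * p ^ 2) ^ p * (2 * (2 ^ k * 3 ^ p))
          = 2 ^ k * (2 * (((4 : ℝ) * p ^ 2) ^ p * 3 ^ p)) := by ring
        _ = 2 ^ k * (2 * ((12 : ℝ) * p ^ 2) ^ p) := by rw [e8]
    rw [e6]
    refine mul_le_mul_of_nonneg_left ?_ (by positivity)
    have e7 : ((24 : ℝ) * p ^ 2) ^ p = 2 ^ p * ((12 : ℝ) * p ^ 2) ^ p := by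
      rw [← mul_pow]; congr 1; ring
    rw [e7]
    refine mul_le_mul_of_nonneg_right ?_ (by positivity)
    exact le_self_pow₀ one_le_two (by omega)
  have hfin := hsum.trans hRHS
  exact le_of_mul_le_mul_left hfin (pow_pos htpos (2 * p))

end Scalar

/-! ### The expected trace bound -/

section Combine
variable {μ : Type*} [Fintype μ] [DecidableEq μ]

lemma mtr_sum {ι : Type*} (s : Finset ι) (f : ι → Matrix μ μ ℝ) :
    mtr (∑ w ∈ s, f w) = ∑ w ∈ s, mtr (f w) := by
  unfold mtr
  rw [Finset.sum_comm]
  refine Finset.sum_congr rfl fun x _ => ?_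
  simp [Matrix.sum_apply]

lemma mtr_smul (c : ℝ) (M : Matrix μ μ ℝ) : mtr (c • M) = c * mtr M := by
  unfold mtr
  rw [Finset.mul_sum]
  refine Finset.sum_congr rfl fun s _ => ?_
  simp [Matrix.smul_apply]

lemma sum_mtr_le {k : ℕ} (Mm : Fin k → Matrix μ μ ℝ) (hS : ∀ i, SubPerm (Mm i)) (m : ℕ) :
    ∑ b : Fin k → Bool, mtr ((∑ i, pmo (b i) • Mm i) ^ m)
      ≤ (Fintype.card μ : ℝ) * ∑ b : Fin k → Bool, (∑ i, pmo (b i)) ^ m := by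
  have hP : ∀ w : Fin m → Fin k, SubPerm (List.ofFn fun j => Mm (w j)).prod := by
    intro w
    refine SubPerm.listProd _ fun P hP => ?_
    obtain ⟨j, hj⟩ := List.mem_ofFn.1 hP
    rw [← hj]
    exact hS _
  have step1 : ∀ b : Fin k → Bool,
      mtr ((∑ i, pmo (b i) • Mm i) ^ m)
        = ∑ w : Fin m → Fin k, (∏ j, pmo (b (w j))) * mtr (List.ofFn fun j => Mm (w j)).prod := by
    intro b
    rw [sum_pow_words (fun i => pmo (b i) • Mm i) m, mtr_sum]
    refine Finset.sum_congr rfl fun w _ => ?_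
    rw [list_smul_prod m (fun j => pmo (b (w j))) (fun j => Mm (w j)), mtr_smul]
  simp_rw [step1]
  rw [Finset.sum_comm]
  have step2 : ∀ w : Fin m → Fin k,
      ∑ b : Fin k → Bool, (∏ j, pmo (b (w j))) * mtr (List.ofFn fun j => Mm (w j)).prod
        ≤ (∑ b : Fin k → Bool, ∏ j, pmo (b (w j))) * (Fintype.card μ : ℝ) := by
    intro w
    calc ∑ b : Fin k → Bool, (∏ j, pmo (b (w j))) * mtr (List.ofFn fun j => Mm (w j)).prod
        = (∑ b : Fin k → Bool, ∏ j, pmo (b (w j))) * mtr (List.ofFn fun j => Mm (w j)).prod := by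
          rw [Finset.sum_mul]
      _ ≤ _ := mul_le_mul_of_nonneg_left ((hP w).mtr_le_card) (word_sum_nonneg w)
  calc ∑ w : Fin m → Fin k, ∑ b : Fin k → Bool,
        (∏ j, pmo (b (w j))) * mtr (List.ofFn fun j => Mm (w j)).prod
      ≤ ∑ w : Fin m → Fin k, (∑ b : Fin k → Bool, ∏ j, pmo (b (w j))) * (Fintype.card μ : ℝ) := by
        exact Finset.sum_le_sum fun w _ => step2 w
    _ = (Fintype.card μ : ℝ) * ∑ b : Fin k → Bool, (∑ i, pmo (b i)) ^ m := by
        rw [← Finset.sum_mul, mul_comm]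
        congr 1
        rw [Finset.sum_comm]
        refine Finset.sum_congr rfl fun b _ => ?_
        rw [sum_pow_words (fun i => pmo (b i)) m]
        refine Finset.sum_congr rfl fun w _ => ?_
        rw [List.prod_ofFn]

end Combine

/-- **Even-`q` spectral norm bound.** There is an absolute constant `c' > 0` such
that, under the even-`q` Kikuchi setup with `n ≥ 2` and `A = Σᵢ b_i A_i`:
`E_{b ~ {-1,1}^k}[‖A‖₂] ≤ c' · √(k ℓ log n)`. -/
theorem even_q_spectral_norm_bound :
    ∃ c' : ℝ, 0 < c' ∧
      ∀ (q k n ℓ : ℕ) (δ c : ℝ) (H : Fin k → Finset (Finset (Fin n))),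
        4 ≤ q → Even q → 2 ≤ n →
        (∀ i, IsMatching q (H i)) →
        (∀ i, ((H i).card : ℝ) = δ * n) →
        Real.exp 16 ≤ c →
        (ℓ : ℝ) = (n : ℝ) ^ (1 - 2 / (q : ℝ)) / c →
        q ≤ ℓ → 2 * ℓ ≤ n →
        (∑ b : Fin k → Bool,
            specNorm (∑ i, pmo (b i) • evenKikMatrix (H i) ℓ)) / 2 ^ k
          ≤ c' * Real.sqrt (k * ℓ * Real.log n) := by
  refine ⟨15, by norm_num, ?_⟩
  intro q k n ℓ δ c H hq4 hqe hn2 hmatch hcard hc hℓeq hqℓ hℓn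
  rcases Nat.eq_zero_or_pos k with hk0 | hkpos
  · subst hk0
    have h0 : ∀ b : Fin 0 → Bool,
        specNorm (∑ i : Fin 0, pmo (b i) • evenKikMatrix (H i) ℓ) = 0 := by
      intro b
      rw [show (∑ i : Fin 0, pmo (b i) • evenKikMatrix (H i) ℓ) = 0 by simp, specNorm_zero]
    rw [Finset.sum_congr rfl (fun b _ => h0 b), Finset.sum_const, smul_zero, zero_div]
    positivity
  -- main case
  have hℓ4 : 4 ≤ ℓ := le_trans hq4 hqℓ
  have hn1R : (1 : ℝ) < n := by exact_mod_cast lt_of_lt_of_le one_lt_two hn2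
  have hn0R : (0 : ℝ) < n := lt_trans one_pos hn1R
  have hlog : 0 < Real.log n := Real.log_pos hn1R
  set r : ℝ := (ℓ : ℝ) * Real.log n with hrdef
  have hlog2 : (0.6931471803 : ℝ) < Real.log 2 := Real.log_two_gt_d9
  have hlogn2 : Real.log 2 ≤ Real.log n := by
    apply Real.log_le_log (by norm_num)
    exact_mod_cast hn2
  have hr2 : (2 : ℝ) < r := by
    have h4ℓ : (4 : ℝ) ≤ (ℓ : ℝ) := by exact_mod_cast hℓ4
    have : (4 : ℝ) * Real.log 2 ≤ r := by
      rw [hrdef]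
      apply mul_le_mul h4ℓ hlogn2 (by linarith) (by positivity)
    nlinarith
  have hrpos : 0 < r := by linarith
  -- choose p = 2^j
  obtain ⟨u, hudef⟩ : ∃ u : ℕ, u = ⌈r⌉₊ := ⟨_, rfl⟩
  have hu3 : 2 < u := by
    rw [hudef]
    exact Nat.lt_ceil.2 (by exact_mod_cast hr2)
  obtain ⟨j, hjdef⟩ : ∃ j : ℕ, j = Nat.clog 2 u := ⟨_, rfl⟩
  have hjpos : 0 < j := hjdef ▸ Nat.clog_pos (by norm_num) (by omega)
  obtain ⟨p, hpdef⟩ : ∃ p : ℕ, p = 2 ^ j := ⟨_, rfl⟩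
  have hup : u ≤ p := by
    rw [hpdef, hjdef]
    exact Nat.le_pow_clog (by norm_num) u
  have hp1 : 1 ≤ p := le_trans (by omega) hup
  have hrp : r ≤ (p : ℝ) := by
    refine le_trans (Nat.le_ceil r) ?_
    rw [← hudef]
    exact_mod_cast hup
  have hp2r : (p : ℝ) ≤ 2 * r := by
    have h9 : 2 ^ (j - 1) < u := by
      rw [hjdef]
      exact Nat.pow_pred_clog_lt_self (by norm_num) (by omega)
    have h10 : p ≤ 2 * u - 2 := by
      have he : p = 2 ^ (j - 1) * 2 := by
        rw [hpdef, ← pow_succ]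
        congr 1
        omega
      omega
    have h11 : (p : ℝ) + 2 ≤ 2 * u := by
      have h : p + 2 ≤ 2 * u := by omega
      exact_mod_cast h
    have h12 : (u : ℝ) < r + 1 := by
      rw [hudef]
      exact Nat.ceil_lt_add_one hrpos.le
    linarith
  -- the matrices
  obtain ⟨Mm, hMm⟩ : ∃ Mm : Fin k → Matrix (EIdx n ℓ) (EIdx n ℓ) ℝ,
      Mm = fun i => evenKikMatrix (H i) ℓ := ⟨_, rfl⟩
  obtain ⟨A, hA⟩ : ∃ A : (Fin k → Bool) → Matrix (EIdx n ℓ) (EIdx n ℓ) ℝ,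
      A = fun b => ∑ i, pmo (b i) • Mm i := ⟨_, rfl⟩
  have hsub : ∀ i, SubPerm (Mm i) := by
    intro i
    simp only [hMm]
    exact evenKikMatrix_subPerm
  have hsymA : ∀ b, (A b)ᵀ = A b := by
    intro b
    simp only [hA]
    rw [Matrix.transpose_sum]
    refine Finset.sum_congr rfl fun i _ => ?_
    rw [Matrix.transpose_smul]
    simp only [hMm]
    rw [evenKikMatrix_symm]
  obtain ⟨x, hx⟩ : ∃ x : (Fin k → Bool) → ℝ, x = fun b => specNorm (A b) := ⟨_, rfl⟩
  have hxnn : ∀ b, 0 ≤ x b := by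
    intro b
    simp only [hx]
    exact specNorm_nonneg _
  -- trace bound per point
  have key1 : ∀ b, x b ^ (2 * p) ≤ mtr (A b ^ (2 * p)) := by
    intro b
    rw [hpdef]
    simp only [hx]
    exact specNorm_pow_le_mtr (hsymA b) j
  -- expected trace bound
  have key2 : ∑ b : Fin k → Bool, mtr (A b ^ (2 * p))
      ≤ (Fintype.card (EIdx n ℓ) : ℝ) * ∑ b : Fin k → Bool, (∑ i, pmo (b i)) ^ (2 * p) := by
    simp only [hA]
    exact sum_mtr_le Mm hsub (2 * p)
  have key3 : ∑ b : Fin k → Bool, (∑ i, pmo (b i)) ^ (2 * p)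
      ≤ 2 ^ k * ((24 : ℝ) * p * k) ^ p := sum_S_pow_le hkpos hp1
  -- card bound
  have hN : (Fintype.card (EIdx n ℓ) : ℝ) ≤ Real.exp p := by
    have hc1 : Fintype.card (EIdx n ℓ) = n.choose ℓ := by
      rw [Fintype.card_finset_len, Fintype.card_fin]
    have hc2 : ((n.choose ℓ : ℕ) : ℝ) ≤ (n : ℝ) ^ ℓ := by
      calc ((n.choose ℓ : ℕ) : ℝ) ≤ (n : ℝ) ^ ℓ / (Nat.factorial ℓ : ℝ) :=
            Nat.choose_le_pow_div ℓ n
        _ ≤ (n : ℝ) ^ ℓ := by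
            apply div_le_self (by positivity)
            exact_mod_cast Nat.one_le_iff_ne_zero.2 (Nat.factorial_ne_zero ℓ)
    have hc3 : (n : ℝ) ^ ℓ = Real.exp r := by
      rw [hrdef, Real.exp_nat_mul, Real.exp_log hn0R]
    rw [hc1]
    calc ((n.choose ℓ : ℕ) : ℝ) ≤ (n : ℝ) ^ ℓ := hc2
      _ = Real.exp r := hc3
      _ ≤ Real.exp p := Real.exp_le_exp.2 hrp
  -- power mean
  have hD : ((Finset.univ : Finset (Fin k → Bool)).card : ℝ) = 2 ^ k := by
    rw [Finset.card_univ, Fintype.card_fun, Fintype.card_bool, Fintype.card_fin]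
    push_cast
    ring
  have PM : (∑ b : Fin k → Bool, x b) ^ (2 * p) / ((2 : ℝ) ^ k) ^ (2 * p - 1)
      ≤ ∑ b : Fin k → Bool, x b ^ (2 * p) := by
    have h := pow_sum_div_card_le_sum_pow (s := Finset.univ) (f := x)
      (fun b _ => hxnn b) (2 * p - 1)
    rw [show 2 * p - 1 + 1 = 2 * p by omega, hD] at h
    exact h
  -- assemble
  obtain ⟨total, htotal⟩ : ∃ total : ℝ, total = ∑ b : Fin k → Bool, x b := ⟨_, rfl⟩
  have htnn : 0 ≤ total := by
    rw [htotal]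
    exact Finset.sum_nonneg fun b _ => hxnn b
  have hchain : (total / 2 ^ k) ^ (2 * p)
      ≤ Real.exp p * ((24 : ℝ) * p * k) ^ p := by
    have hxsum : ∑ b : Fin k → Bool, x b ^ (2 * p)
        ≤ (Fintype.card (EIdx n ℓ) : ℝ) * (2 ^ k * ((24 : ℝ) * p * k) ^ p) := by
      calc ∑ b : Fin k → Bool, x b ^ (2 * p)
          ≤ ∑ b : Fin k → Bool, mtr (A b ^ (2 * p)) :=
            Finset.sum_le_sum fun b _ => key1 b
        _ ≤ (Fintype.card (EIdx n ℓ) : ℝ) * ∑ b : Fin k → Bool, (∑ i, pmo (b i)) ^ (2 * p) :=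
            key2
        _ ≤ (Fintype.card (EIdx n ℓ) : ℝ) * (2 ^ k * ((24 : ℝ) * p * k) ^ p) :=
            mul_le_mul_of_nonneg_left key3 (by positivity)
    have h1 : total ^ (2 * p)
        ≤ ((2 : ℝ) ^ k) ^ (2 * p - 1) * ((Fintype.card (EIdx n ℓ) : ℝ)
            * (2 ^ k * ((24 : ℝ) * p * k) ^ p)) := by
      have h2 := PM.trans hxsum
      rw [← htotal, div_le_iff₀ (by positivity)] at h2
      linarith [h2]
    have h3 : (total / 2 ^ k) ^ (2 * p) = total ^ (2 * p) / ((2 : ℝ) ^ k) ^ (2 * p) := by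
      rw [div_pow]
    rw [h3, div_le_iff₀ (by positivity)]
    calc total ^ (2 * p)
        ≤ ((2 : ℝ) ^ k) ^ (2 * p - 1) * ((Fintype.card (EIdx n ℓ) : ℝ)
            * (2 ^ k * ((24 : ℝ) * p * k) ^ p)) := h1
      _ = ((Fintype.card (EIdx n ℓ) : ℝ) * ((24 : ℝ) * p * k) ^ p)
            * (((2 : ℝ) ^ k) ^ (2 * p - 1) * 2 ^ k) := by ring
      _ = ((Fintype.card (EIdx n ℓ) : ℝ) * ((24 : ℝ) * p * k) ^ p)
            * ((2 : ℝ) ^ k) ^ (2 * p) := by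
          congr 1
          rw [← pow_succ, show 2 * p - 1 + 1 = 2 * p by omega]
      _ ≤ (Real.exp p * ((24 : ℝ) * p * k) ^ p) * ((2 : ℝ) ^ k) ^ (2 * p) := by
          refine mul_le_mul_of_nonneg_right ?_ (by positivity)
          exact mul_le_mul_of_nonneg_right hN (by positivity)
  -- numeric conclusion
  have hfinal : (total / 2 ^ k) ^ (2 * p)
      ≤ (15 * Real.sqrt ((k : ℝ) * ℓ * Real.log n)) ^ (2 * p) := by
    have hX : (k : ℝ) * ℓ * Real.log n = (k : ℝ) * r := by
      rw [hrdef]; ring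
    have hXnn : 0 ≤ (k : ℝ) * r := by positivity
    have hsq : (15 * Real.sqrt ((k : ℝ) * ℓ * Real.log n)) ^ (2 * p)
        = ((225 : ℝ) * ((k : ℝ) * r)) ^ p := by
      rw [hX, pow_mul]
      congr 1
      rw [mul_pow, Real.sq_sqrt hXnn]
      norm_num
    rw [hsq]
    refine hchain.trans ?_
    have he3 : Real.exp (p : ℝ) ≤ 3 ^ p := by
      rw [show ((p : ℕ) : ℝ) = (p : ℕ) * (1 : ℝ) by ring, Real.exp_nat_mul]
      refine pow_le_pow_left₀ (Real.exp_pos _).le ?_ p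
      linarith [Real.exp_one_lt_d9]
    calc Real.exp (p : ℝ) * ((24 : ℝ) * p * k) ^ p
        ≤ 3 ^ p * ((24 : ℝ) * p * k) ^ p := by
          refine mul_le_mul_of_nonneg_right he3 (by positivity)
      _ = ((72 : ℝ) * p * k) ^ p := by
          rw [← mul_pow]
          congr 1
          ring
      _ ≤ ((225 : ℝ) * ((k : ℝ) * r)) ^ p := by
          refine pow_le_pow_left₀ (by positivity) ?_ p
          have hkR : (0 : ℝ) < k := by exact_mod_cast hkpos
          nlinarith [hrpos, hp2r, hkR]
  have hrhs_nn : 0 ≤ 15 * Real.sqrt ((k : ℝ) * ℓ * Real.log n) := by positivity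
  have hconc := le_of_pow_le_pow_left₀ (by omega : 2 * p ≠ 0) hrhs_nn hfinal
  have hgoal : (∑ b : Fin k → Bool,
      specNorm (∑ i, pmo (b i) • evenKikMatrix (H i) ℓ)) / 2 ^ k = total / 2 ^ k := by
    rw [htotal]
    congr 1
    refine Finset.sum_congr rfl fun b _ => ?_
    simp only [hx, hA, hMm]
  rw [hgoal]
  exact hconc
end
end

section
/- Let n, ℓ, q be positive integers with n/2 ≥ ℓ ≥ q. Then e^{3q} · (ℓ/n)^q ≥ C(n - 2q, ℓ - q) / C(n, ℓ) ≥ e^{-3q} · (ℓ/n)^q, where C(a, b) denotes the binomial coefficient. -/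
open Finset

private lemma descFactorial_pos' {n k : ℕ} (h : k ≤ n) : 0 < n.descFactorial k := by
  rcases Nat.eq_zero_or_pos (n.descFactorial k) with h0 | h0
  · exact absurd (Nat.descFactorial_eq_zero_iff_lt.mp h0) (not_lt.mpr h)
  · exact h0

/-- `q^q ≤ e^q · q!` -/
private lemma pow_le_exp_mul_factorial (q : ℕ) :
    (q : ℝ) ^ q ≤ Real.exp q * q.factorial := by
  induction q with
  | zero => simp
  | succ k ih =>
    rcases Nat.eq_zero_or_pos k with hk | hk
    · subst hk
      simpa using (by nlinarith [Real.add_one_le_exp (1 : ℝ)] : (1:ℝ) ≤ Real.exp 1)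
    · have hk' : (0 : ℝ) < k := by exact_mod_cast hk
      have h2 : ((k : ℝ) + 1) ≤ Real.exp (1 / k) * k := by
        have h3 := Real.add_one_le_exp (1 / (k : ℝ))
        have h4 : ((1 / (k:ℝ)) + 1) * k ≤ Real.exp (1 / k) * k :=
          mul_le_mul_of_nonneg_right h3 hk'.le
        have h5 : ((1 / (k:ℝ)) + 1) * k = k + 1 := by field_simp; ring
        linarith [h4, h5.le]
      have h1 : ((k : ℝ) + 1) ^ k ≤ Real.exp 1 * (k : ℝ) ^ k := by
        have := pow_le_pow_left₀ (by positivity) h2 k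
        have he : (Real.exp (1 / (k:ℝ)) * k) ^ k = Real.exp 1 * (k:ℝ) ^ k := by
          rw [mul_pow, ← Real.exp_nat_mul]
          congr 2
          field_simp
        rw [he] at this
        exact this
      have hstep : ((k : ℝ) + 1) ^ (k + 1) ≤ Real.exp (k + 1) * ((k + 1).factorial) := by
        calc ((k : ℝ) + 1) ^ (k + 1) = ((k:ℝ) + 1) * ((k:ℝ) + 1) ^ k := by ring
          _ ≤ ((k:ℝ) + 1) * (Real.exp 1 * (k:ℝ) ^ k) := by
              apply mul_le_mul_of_nonneg_left h1 (by positivity)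
          _ ≤ ((k:ℝ) + 1) * (Real.exp 1 * (Real.exp k * k.factorial)) := by
              apply mul_le_mul_of_nonneg_left _ (by positivity)
              exact mul_le_mul_of_nonneg_left ih (Real.exp_pos 1).le
          _ = Real.exp (k + 1) * (((k:ℝ) + 1) * k.factorial) := by
              rw [Real.exp_add]; ring
          _ = Real.exp (k + 1) * ((k + 1).factorial) := by
              rw [Nat.factorial_succ]; push_cast; ring
      calc ((k + 1 : ℕ) : ℝ) ^ (k + 1) = ((k:ℝ) + 1) ^ (k + 1) := by push_cast; ring
        _ ≤ Real.exp (k + 1) * ((k + 1).factorial) := hstep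
        _ = Real.exp ((k + 1 : ℕ) : ℝ) * ((k + 1).factorial) := by push_cast; ring

/-- `x^q · q! ≤ q^q · x.descFactorial q` for `q ≤ x`. -/
private lemma pow_mul_factorial_le (x q : ℕ) (h : q ≤ x) :
    x ^ q * q.factorial ≤ q ^ q * x.descFactorial q := by
  have hx : x ^ q = ∏ _i ∈ range q, x := by simp
  have hq2 : q ^ q = ∏ _i ∈ range q, q := by simp
  rw [← Nat.descFactorial_self q, Nat.descFactorial_eq_prod_range,
    Nat.descFactorial_eq_prod_range, hx, hq2, ← Finset.prod_mul_distrib,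
    ← Finset.prod_mul_distrib]
  · apply Finset.prod_le_prod (fun _ _ => Nat.zero_le _)
    intro i hi
    rw [Finset.mem_range] at hi
    have hiq : i ≤ q := hi.le
    have hix : i ≤ x := hiq.trans h
    zify [hiq, hix]
    nlinarith [mul_le_mul_of_nonneg_left (show (q:ℤ) ≤ x by exact_mod_cast h)
      (show (0:ℤ) ≤ i by positivity)]

/-- Real lower bound: `x^q ≤ e^q · x.descFactorial q` for `q ≤ x`. -/
private lemma pow_le_exp_mul_descFactorial (x q : ℕ) (h : q ≤ x) :
    (x : ℝ) ^ q ≤ Real.exp q * (x.descFactorial q : ℝ) := by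
  have h1 : (x : ℝ) ^ q * q.factorial ≤ (q:ℝ) ^ q * x.descFactorial q := by
    exact_mod_cast pow_mul_factorial_le x q h
  have h2 : (q:ℝ) ^ q * x.descFactorial q
      ≤ (Real.exp q * q.factorial) * x.descFactorial q :=
    mul_le_mul_of_nonneg_right (pow_le_exp_mul_factorial q) (by positivity)
  have hfac : (0:ℝ) < q.factorial := by exact_mod_cast q.factorial_pos
  have := h1.trans h2
  nlinarith [this]

/-- **Binomial coefficient ratio bound.** For positive integers `n, ℓ, q` with
`n/2 ≥ ℓ ≥ q`:
`e^{3q} (ℓ/n)^q ≥ C(n-2q, ℓ-q) / C(n, ℓ) ≥ e^{-3q} (ℓ/n)^q`. -/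
theorem binomial_ratio_bound (n ℓ q : ℕ) (hq : 0 < q) (hℓq : q ≤ ℓ) (hℓn : 2 * ℓ ≤ n) :
    Real.exp (-(3 * q)) * ((ℓ : ℝ) / n) ^ q
        ≤ (Nat.choose (n - 2 * q) (ℓ - q) : ℝ) / (Nat.choose n ℓ : ℝ) ∧
      (Nat.choose (n - 2 * q) (ℓ - q) : ℝ) / (Nat.choose n ℓ : ℝ)
        ≤ Real.exp (3 * q) * ((ℓ : ℝ) / n) ^ q := by
  have hℓn' : ℓ ≤ n := by omega
  have h2qn : 2 * q ≤ n := by omega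
  have hqnl : q ≤ n - ℓ := by omega
  have hnpos : 0 < n := by omega
  set A := ℓ.descFactorial q with hA_def
  set B := (n - ℓ).descFactorial q with hB_def
  set C := n.descFactorial (2 * q) with hC_def
  have hApos : 0 < A := descFactorial_pos' hℓq
  have hBpos : 0 < B := descFactorial_pos' hqnl
  have hCpos : 0 < C := descFactorial_pos' h2qn
  -- the key natural-number identity
  have hkey : (n - 2 * q).choose (ℓ - q) * C = n.choose ℓ * (A * B) := by
    have h1 : (ℓ - q).factorial * A = ℓ.factorial := Nat.factorial_mul_descFactorial hℓq
    have h2 : (n - ℓ - q).factorial * B = (n - ℓ).factorial :=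
      Nat.factorial_mul_descFactorial hqnl
    have h3 : (n - 2 * q).factorial * C = n.factorial :=
      Nat.factorial_mul_descFactorial h2qn
    have h4 : n.choose ℓ * ℓ.factorial * (n - ℓ).factorial = n.factorial :=
      Nat.choose_mul_factorial_mul_factorial hℓn'
    have h5 : (n - 2 * q).choose (ℓ - q) * (ℓ - q).factorial * (n - ℓ - q).factorial
        = (n - 2 * q).factorial := by
      have := Nat.choose_mul_factorial_mul_factorial (show ℓ - q ≤ n - 2 * q by omega)
      rwa [show n - 2 * q - (ℓ - q) = n - ℓ - q by omega] at this
    apply Nat.eq_of_mul_eq_mul_right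
      (show 0 < (ℓ - q).factorial * (n - ℓ - q).factorial from
        Nat.mul_pos (Nat.factorial_pos _) (Nat.factorial_pos _))
    calc (n - 2 * q).choose (ℓ - q) * C * ((ℓ - q).factorial * (n - ℓ - q).factorial)
        = ((n - 2 * q).choose (ℓ - q) * (ℓ - q).factorial * (n - ℓ - q).factorial) * C := by
          ring
      _ = (n - 2 * q).factorial * C := by rw [h5]
      _ = n.factorial := h3
      _ = n.choose ℓ * ℓ.factorial * (n - ℓ).factorial := h4.symm
      _ = n.choose ℓ * ((ℓ - q).factorial * A) * ((n - ℓ - q).factorial * B) := by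
          rw [h1, h2]
      _ = n.choose ℓ * (A * B) * ((ℓ - q).factorial * (n - ℓ - q).factorial) := by ring
  have hchoosepos : 0 < n.choose ℓ := Nat.choose_pos hℓn'
  -- the ratio as a real number
  have hR : (Nat.choose (n - 2 * q) (ℓ - q) : ℝ) / (Nat.choose n ℓ : ℝ)
      = ((A * B : ℕ) : ℝ) / (C : ℝ) := by
    rw [div_eq_div_iff (show ((n.choose ℓ : ℕ):ℝ) ≠ 0 from Nat.cast_ne_zero.mpr hchoosepos.ne') (show ((C:ℕ):ℝ) ≠ 0 from Nat.cast_ne_zero.mpr hCpos.ne')]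
    have hreal : (((n - 2 * q).choose (ℓ - q) : ℕ) : ℝ) * (C : ℝ)
        = ((n.choose ℓ : ℕ) : ℝ) * ((A : ℝ) * (B : ℝ)) := by exact_mod_cast hkey
    push_cast
    linear_combination hreal
  -- the upper bound (in ℕ): A * B * n^q ≤ ℓ^q * C
  have hupper : A * B * n ^ q ≤ ℓ ^ q * C := by
    have hCsplit : (n - q).descFactorial q * n.descFactorial q = C := by
      have := Nat.descFactorial_mul_descFactorial (show q ≤ 2 * q by omega) (n := n)
      rwa [show 2 * q - q = q by omega] at this
    rw [hA_def, hB_def, ← hCsplit, Nat.descFactorial_eq_prod_range,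
      Nat.descFactorial_eq_prod_range, Nat.descFactorial_eq_prod_range,
      Nat.descFactorial_eq_prod_range,
      show n ^ q = ∏ _i ∈ range q, n from by simp,
      show ℓ ^ q = ∏ _i ∈ range q, ℓ from by simp, ← Finset.prod_mul_distrib,
      ← Finset.prod_mul_distrib, ← Finset.prod_mul_distrib, ← Finset.prod_mul_distrib]
    apply Finset.prod_le_prod (fun _ _ => Nat.zero_le _)
    intro i hi
    rw [Finset.mem_range] at hi
    have h1 : n * (ℓ - i) ≤ ℓ * (n - i) := by
      have hiℓ : i ≤ ℓ := by omega
      have hin : i ≤ n := by omega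
      zify [hiℓ, hin]
      nlinarith [mul_le_mul_of_nonneg_left (show (ℓ:ℤ) ≤ n by exact_mod_cast hℓn')
        (show (0:ℤ) ≤ i by positivity)]
    have h2 : n - ℓ - i ≤ n - q - i := by omega
    calc (ℓ - i) * (n - ℓ - i) * n = (n * (ℓ - i)) * (n - ℓ - i) := by ring
      _ ≤ (ℓ * (n - i)) * (n - q - i) := Nat.mul_le_mul h1 h2
      _ = ℓ * ((n - q - i) * (n - i)) := by ring
  constructor
  · -- lower bound
    rw [hR, le_div_iff₀ (by exact_mod_cast hCpos)]
    set E := Real.exp (-(q : ℝ)) with hE_def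
    have hEpos : 0 < E := Real.exp_pos _
    have hA' : E * (ℓ : ℝ) ^ q ≤ (A : ℝ) := by
      have := pow_le_exp_mul_descFactorial ℓ q hℓq
      calc E * (ℓ : ℝ) ^ q ≤ E * (Real.exp q * (A : ℝ)) :=
            mul_le_mul_of_nonneg_left this hEpos.le
        _ = (A : ℝ) := by rw [hE_def, ← mul_assoc, ← Real.exp_add]; simp
    have hB' : E * ((n - ℓ : ℕ) : ℝ) ^ q ≤ (B : ℝ) := by
      have := pow_le_exp_mul_descFactorial (n - ℓ) q hqnl
      calc E * ((n - ℓ : ℕ) : ℝ) ^ q ≤ E * (Real.exp q * (B : ℝ)) :=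
            mul_le_mul_of_nonneg_left this hEpos.le
        _ = (B : ℝ) := by rw [hE_def, ← mul_assoc, ← Real.exp_add]; simp
    have hexp1 : Real.exp (-(1:ℝ)) ≤ 1 / 2 := by
      have h := Real.add_one_le_exp (1 : ℝ)
      rw [Real.exp_neg]
      rw [inv_le_comm₀ (Real.exp_pos 1) (by norm_num)]
      linarith
    have hnl2 : (n : ℝ) / 2 ≤ ((n - ℓ : ℕ) : ℝ) := by
      rw [Nat.cast_sub hℓn']
      have : (2 * ℓ : ℝ) ≤ n := by exact_mod_cast hℓn
      linarith
    have hstep : Real.exp (-(1:ℝ)) * (n : ℝ) ≤ ((n - ℓ : ℕ) : ℝ) := by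
      have hn0 : (0:ℝ) ≤ n := by positivity
      nlinarith [hexp1, hnl2]
    have hpow : E * (n : ℝ) ^ q ≤ ((n - ℓ : ℕ) : ℝ) ^ q := by
      have h := pow_le_pow_left₀ (by positivity) hstep q
      have he : (Real.exp (-(1:ℝ)) * (n:ℝ)) ^ q
          = E * (n : ℝ) ^ q := by
        rw [mul_pow, hE_def, ← Real.exp_nat_mul]
        congr 2
        push_cast; ring
      rwa [he] at h
    have hC' : (C : ℝ) ≤ (n : ℝ) ^ q * (n : ℝ) ^ q := by
      have := Nat.descFactorial_le_pow n (2 * q)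
      have h2 : (C : ℝ) ≤ (n : ℝ) ^ (2 * q) := by exact_mod_cast this
      rwa [two_mul, pow_add] at h2
    have hE3 : Real.exp (-(3 * (q:ℝ))) = E * E * E := by
      rw [hE_def, ← Real.exp_add, ← Real.exp_add]
      congr 1; ring
    have hNpos : (0:ℝ) < (n : ℝ) ^ q := by positivity
    calc Real.exp (-(3 * (q:ℝ))) * ((ℓ : ℝ) / n) ^ q * (C : ℝ)
        ≤ Real.exp (-(3 * (q:ℝ))) * ((ℓ : ℝ) / n) ^ q * ((n:ℝ)^q * (n:ℝ)^q) := by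
          apply mul_le_mul_of_nonneg_left hC' (by positivity)
      _ = (E * (ℓ:ℝ)^q) * (E * (E * (n:ℝ)^q)) := by
          rw [hE3, div_pow]
          field_simp
      _ ≤ (E * (ℓ:ℝ)^q) * (E * ((n - ℓ : ℕ) : ℝ) ^ q) := by
          apply mul_le_mul_of_nonneg_left _ (by positivity)
          exact mul_le_mul_of_nonneg_left hpow hEpos.le
      _ ≤ (A : ℝ) * (B : ℝ) := by
          apply mul_le_mul hA' hB' (by positivity) (by positivity)
      _ = ((A * B : ℕ) : ℝ) := by push_cast; ring
  · -- upper bound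
    rw [hR, div_le_iff₀ (by exact_mod_cast hCpos)]
    have h1 : ((A * B : ℕ) : ℝ) * (n:ℝ)^q ≤ (ℓ:ℝ)^q * (C : ℝ) := by exact_mod_cast hupper
    have hNpos : (0:ℝ) < (n : ℝ) ^ q := by positivity
    have hexp : (1:ℝ) ≤ Real.exp (3 * (q:ℝ)) := Real.one_le_exp (by positivity)
    have h2 : ((A * B : ℕ) : ℝ) ≤ ((ℓ : ℝ) / n) ^ q * (C : ℝ) := by
      rw [div_pow]
      rw [div_mul_eq_mul_div, le_div_iff₀ hNpos]
      linarith [h1]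
    calc ((A * B : ℕ) : ℝ) ≤ ((ℓ : ℝ) / n) ^ q * (C : ℝ) := h2
      _ ≤ Real.exp (3 * (q:ℝ)) * ((ℓ : ℝ) / n) ^ q * (C : ℝ) := by
          apply mul_le_mul_of_nonneg_right _ (by positivity)
          nlinarith [hexp, pow_nonneg (show (0:ℝ) ≤ (ℓ:ℝ)/n by positivity) q]
      _ = Real.exp (3 * (q:ℝ)) * ((ℓ : ℝ) / n) ^ q * (C : ℝ) := rfl
end
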